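/- arXiv:quant-ph/0302121 — 3 statements merged into one kernel-verified Lean document; each statement's English description precedes it below -/
import Mathlib

section
/- For a two-level system: the Lie algebra generated by iH₀ and iH₁, where H₀ = diag(E₁,E₂) with E₁ ≠ E₂ and H₁ has (1,2) and (2,1) entries equal to d ≠ 0 and zero diagonal, equals u(2) if E₁ + E₂ ≠ 0, and equals su(2) plus the span of i(E₁+E₂)I otherwise; in particular it contains su(2). -/
open Matrix

attribute [local instance 100] LieRing.ofAssociativeRing

/-!
Write `iσ_x, iσ_y, iσ_z` for `i` times the Pauli matrices; they form a real basis of `su(2)` with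
`⁅iσ_x, iσ_y⁆ = -2 iσ_z` and cyclically. The generators decompose as
`iH₀ = ((E₁ + E₂) / 2) • i1 + ((E₁ - E₂) / 2) • iσ_z` and `iH₁ = d • iσ_x`, and `i1` is central, so
`⁅iH₀, iH₁⁆` is a nonzero multiple of `iσ_y`; together with `iσ_x` it generates `su(2)`.
The remaining generator then contributes `((E₁ + E₂) / 2) • i1`, which together with `su(2)` spans
`u(2)` exactly when `E₁ + E₂ ≠ 0`, while for `E₁ + E₂ = 0` both generators are traceless.
-/

namespace Matrix

variable (n : Type*) [Fintype n] [DecidableEq n]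

noncomputable def unitaryLieAlgebra : LieSubalgebra ℝ (Matrix n n ℂ) where
  carrier := {X | Xᴴ = -X}
  add_mem' {X Y} hX hY := by
    simp only [Set.mem_ofPred_eq, conjTranspose_add] at *
    rw [hX, hY, neg_add]
  zero_mem' := by simp
  smul_mem' c X hX := by
    simp only [Set.mem_ofPred_eq, conjTranspose_smul, star_trivial] at *
    rw [hX, smul_neg]
  lie_mem' {X Y} hX hY := by
    simp only [Set.mem_ofPred_eq, Ring.lie_def, conjTranspose_sub, conjTranspose_mul] at *
    rw [hX, hY, neg_mul_neg, neg_mul_neg, neg_sub]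

noncomputable def specialUnitaryLieAlgebra : LieSubalgebra ℝ (Matrix n n ℂ) where
  carrier := {X | X ∈ unitaryLieAlgebra n ∧ X.trace = 0}
  add_mem' {X Y} hX hY := ⟨add_mem hX.1 hY.1, by rw [trace_add, hX.2, hY.2, add_zero]⟩
  zero_mem' := ⟨zero_mem _, trace_zero n ℂ⟩
  smul_mem' c X hX := ⟨(unitaryLieAlgebra n).smul_mem c hX.1, by rw [trace_smul, hX.2, smul_zero]⟩
  lie_mem' {X Y} hX hY :=
    ⟨(unitaryLieAlgebra n).lie_mem hX.1 hY.1,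
      by rw [Ring.lie_def, trace_sub, trace_mul_comm, sub_self]⟩

variable {n}

@[simp]
theorem mem_unitaryLieAlgebra {X : Matrix n n ℂ} : X ∈ unitaryLieAlgebra n ↔ Xᴴ = -X :=
  Iff.rfl

@[simp]
theorem mem_specialUnitaryLieAlgebra {X : Matrix n n ℂ} :
    X ∈ specialUnitaryLieAlgebra n ↔ Xᴴ = -X ∧ X.trace = 0 :=
  Iff.rfl

theorem specialUnitaryLieAlgebra_le_unitaryLieAlgebra :
    specialUnitaryLieAlgebra n ≤ unitaryLieAlgebra n :=
  fun _ hX => hX.1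

theorem re_trace_eq_zero_of_mem_unitaryLieAlgebra {X : Matrix n n ℂ}
    (hX : X ∈ unitaryLieAlgebra n) : X.trace.re = 0 := by
  have h := congrArg (fun A => (trace A).re) (mem_unitaryLieAlgebra.mp hX)
  simp only [trace_conjTranspose, trace_neg, Complex.star_def, Complex.conj_re,
    Complex.neg_re] at h
  linarith

theorem I_smul_one_mem_unitaryLieAlgebra :
    Complex.I • (1 : Matrix n n ℂ) ∈ unitaryLieAlgebra n := by
  simp [conjTranspose_smul]

theorem unitaryLieAlgebra_le_of_specialUnitaryLieAlgebra_le [Nonempty n]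
    {L : LieSubalgebra ℝ (Matrix n n ℂ)} (hsu : specialUnitaryLieAlgebra n ≤ L)
    (hI : Complex.I • (1 : Matrix n n ℂ) ∈ L) : unitaryLieAlgebra n ≤ L := by
  intro X hX
  set c : ℝ := X.trace.im / Fintype.card n
  have htraceless : X - c • Complex.I • (1 : Matrix n n ℂ) ∈ specialUnitaryLieAlgebra n := by
    refine ⟨sub_mem hX ((unitaryLieAlgebra n).smul_mem c I_smul_one_mem_unitaryLieAlgebra), ?_⟩
    have hre := re_trace_eq_zero_of_mem_unitaryLieAlgebra hX
    have hcard : (Fintype.card n : ℝ) ≠ 0 := Nat.cast_ne_zero.mpr Fintype.card_ne_zero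
    apply Complex.ext <;> simp [c, trace_sub, trace_smul, Complex.real_smul, hre, hcard]
  simpa using add_mem (hsu htraceless) (L.smul_mem c hI)

section Pauli

open Complex

noncomputable def pauliX : Matrix (Fin 2) (Fin 2) ℂ := !![0, 1; 1, 0]
noncomputable def pauliY : Matrix (Fin 2) (Fin 2) ℂ := !![0, -Complex.I; Complex.I, 0]
noncomputable def pauliZ : Matrix (Fin 2) (Fin 2) ℂ := !![1, 0; 0, -1]

theorem lie_I_smul_pauliX_I_smul_pauliY :
    ⁅I • pauliX, I • pauliY⁆ = (-2 : ℝ) • I • pauliZ := by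
  ext i j; fin_cases i <;> fin_cases j <;>
    simp [pauliX, pauliY, pauliZ, Ring.lie_def] <;> ring

theorem lie_I_smul_pauliZ_I_smul_pauliX :
    ⁅I • pauliZ, I • pauliX⁆ = (-2 : ℝ) • I • pauliY := by
  ext i j; fin_cases i <;> fin_cases j <;>
    simp [pauliX, pauliY, pauliZ, Ring.lie_def] <;> ring

theorem eq_pauli_combination_of_mem_specialUnitaryLieAlgebra {X : Matrix (Fin 2) (Fin 2) ℂ}
    (hX : X ∈ specialUnitaryLieAlgebra (Fin 2)) :
    X = (X 0 1).im • I • pauliX + (X 0 1).re • I • pauliY + (X 0 0).im • I • pauliZ := by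
  obtain ⟨hskew, htr⟩ := mem_specialUnitaryLieAlgebra.mp hX
  have h00 := congrFun (congrFun hskew 0) 0
  have h10 := congrFun (congrFun hskew 0) 1
  have h11 : X 1 1 = -X 0 0 := by rw [trace_fin_two] at htr; linear_combination htr
  simp only [conjTranspose_apply, neg_apply, star_def, Complex.ext_iff, conj_re, conj_im,
    neg_re, neg_im] at h00 h10
  ext i j; fin_cases i <;> fin_cases j <;> apply Complex.ext <;>
    simp [pauliX, pauliY, pauliZ, h11] <;> linarith

theorem I_smul_pauliX_mem_specialUnitaryLieAlgebra :
    I • pauliX ∈ specialUnitaryLieAlgebra (Fin 2) := by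
  constructor
  · ext i j; fin_cases i <;> fin_cases j <;> simp [pauliX, conjTranspose_apply]
  · simp [pauliX, trace_fin_two]

theorem I_smul_pauliZ_mem_specialUnitaryLieAlgebra :
    I • pauliZ ∈ specialUnitaryLieAlgebra (Fin 2) := by
  constructor
  · ext i j; fin_cases i <;> fin_cases j <;> simp [pauliZ, conjTranspose_apply]
  · simp [pauliZ, trace_fin_two]

theorem specialUnitaryLieAlgebra_le_of_I_smul_pauliX_mem_of_I_smul_pauliY_mem
    {L : LieSubalgebra ℝ (Matrix (Fin 2) (Fin 2) ℂ)} (hX : I • pauliX ∈ L)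
    (hY : I • pauliY ∈ L) : specialUnitaryLieAlgebra (Fin 2) ≤ L := by
  have hZ : I • pauliZ ∈ L := by
    have h := L.lie_mem hX hY
    rw [lie_I_smul_pauliX_I_smul_pauliY] at h
    exact (L.toSubmodule.smul_mem_iff (by norm_num)).1 h
  intro A hA
  rw [eq_pauli_combination_of_mem_specialUnitaryLieAlgebra hA]
  exact add_mem (add_mem (L.smul_mem _ hX) (L.smul_mem _ hY)) (L.smul_mem _ hZ)

theorem lie_drift_control (α β d : ℝ) :
    ⁅α • I • (1 : Matrix (Fin 2) (Fin 2) ℂ) + β • I • pauliZ, d • I • pauliX⁆ =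
      (-2 * β * d) • I • pauliY := by
  have hcentral : ⁅I • (1 : Matrix (Fin 2) (Fin 2) ℂ), I • pauliX⁆ = 0 := by
    rw [smul_lie, lie_smul, Ring.lie_def, one_mul, mul_one, sub_self, smul_zero, smul_zero]
  rw [add_lie, smul_lie α, smul_lie β, lie_smul d, lie_smul d, hcentral,
    lie_I_smul_pauliZ_I_smul_pauliX, smul_zero, smul_zero, zero_add, smul_smul, smul_smul]
  congr 1; ring

noncomputable def twoLevelGenerators (α β d : ℝ) : Set (Matrix (Fin 2) (Fin 2) ℂ) :=
  {α • I • 1 + β • I • pauliZ, d • I • pauliX}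

open LieSubalgebra

variable {α β d : ℝ}

theorem specialUnitaryLieAlgebra_le_lieSpan (hβ : β ≠ 0) (hd : d ≠ 0) :
    specialUnitaryLieAlgebra (Fin 2) ≤ lieSpan ℝ _ (twoLevelGenerators α β d) := by
  set L := lieSpan ℝ _ (twoLevelGenerators α β d)
  have hdrift : α • I • 1 + β • I • pauliZ ∈ L := subset_lieSpan (by simp [twoLevelGenerators])
  have hcontrol : d • I • pauliX ∈ L := subset_lieSpan (by simp [twoLevelGenerators])
  apply specialUnitaryLieAlgebra_le_of_I_smul_pauliX_mem_of_I_smul_pauliY_mem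
  · exact (L.toSubmodule.smul_mem_iff hd).1 hcontrol
  · have h := L.lie_mem hdrift hcontrol
    rw [lie_drift_control] at h
    exact (L.toSubmodule.smul_mem_iff (by simp [hβ, hd])).1 h

theorem unitaryLieAlgebra_le_lieSpan (hα : α ≠ 0) (hβ : β ≠ 0) (hd : d ≠ 0) :
    unitaryLieAlgebra (Fin 2) ≤ lieSpan ℝ _ (twoLevelGenerators α β d) := by
  set L := lieSpan ℝ _ (twoLevelGenerators α β d)
  have hsu := specialUnitaryLieAlgebra_le_lieSpan (α := α) hβ hd
  refine unitaryLieAlgebra_le_of_specialUnitaryLieAlgebra_le hsu ?_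
  have hdrift : α • I • 1 + β • I • pauliZ ∈ L := subset_lieSpan (by simp [twoLevelGenerators])
  have h := sub_mem hdrift (L.smul_mem β (hsu I_smul_pauliZ_mem_specialUnitaryLieAlgebra))
  rw [add_sub_cancel_right] at h
  exact (L.toSubmodule.smul_mem_iff hα).1 h

theorem lieSpan_le_unitaryLieAlgebra :
    lieSpan ℝ _ (twoLevelGenerators α β d) ≤ unitaryLieAlgebra (Fin 2) := by
  have hsu := specialUnitaryLieAlgebra_le_unitaryLieAlgebra (n := Fin 2)
  refine lieSpan_le.mpr (Set.insert_subset_iff.mpr ⟨?_, Set.singleton_subset_iff.mpr ?_⟩)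
  · exact add_mem ((unitaryLieAlgebra _).smul_mem α I_smul_one_mem_unitaryLieAlgebra)
      ((unitaryLieAlgebra _).smul_mem β (hsu I_smul_pauliZ_mem_specialUnitaryLieAlgebra))
  · exact (unitaryLieAlgebra _).smul_mem d (hsu I_smul_pauliX_mem_specialUnitaryLieAlgebra)

theorem lieSpan_le_specialUnitaryLieAlgebra :
    lieSpan ℝ _ (twoLevelGenerators 0 β d) ≤ specialUnitaryLieAlgebra (Fin 2) :=
  lieSpan_le.mpr (Set.insert_subset_iff.mpr
    ⟨by simpa using
        (specialUnitaryLieAlgebra _).smul_mem β I_smul_pauliZ_mem_specialUnitaryLieAlgebra,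
      Set.singleton_subset_iff.mpr
        ((specialUnitaryLieAlgebra _).smul_mem d I_smul_pauliX_mem_specialUnitaryLieAlgebra)⟩)

end Pauli

end Matrix

/-- For a two-level system with H₀ = diag(E₁,E₂), E₁ ≠ E₂, and off-diagonal
coupling H₁ with entry d ≠ 0, the real Lie algebra generated by iH₀ and iH₁
equals u(2) if E₁+E₂ ≠ 0 and su(2) (= su(2) plus the span of i(E₁+E₂)I = 0)
otherwise; in particular it always contains su(2). -/
theorem two_level_dynamical_lie_algebra (E₁ E₂ d : ℝ) (hE : E₁ ≠ E₂) (hd : d ≠ 0)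
    (H₀ H₁ : Matrix (Fin 2) (Fin 2) ℂ)
    (hH₀ : H₀ = Matrix.of ![![(E₁ : ℂ), 0], ![0, (E₂ : ℂ)]])
    (hH₁ : H₁ = Matrix.of ![![0, (d : ℂ)], ![(d : ℂ), 0]])
    (L : LieSubalgebra ℝ (Matrix (Fin 2) (Fin 2) ℂ))
    (hL : L = LieSubalgebra.lieSpan ℝ (Matrix (Fin 2) (Fin 2) ℂ)
      {Complex.I • H₀, Complex.I • H₁}) :
    (E₁ + E₂ ≠ 0 → ∀ X : Matrix (Fin 2) (Fin 2) ℂ, X ∈ L ↔ Xᴴ = -X) ∧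
    (E₁ + E₂ = 0 → ∀ X : Matrix (Fin 2) (Fin 2) ℂ,
      X ∈ L ↔ (Xᴴ = -X ∧ X.trace = 0)) ∧
    (∀ X : Matrix (Fin 2) (Fin 2) ℂ, Xᴴ = -X → X.trace = 0 → X ∈ L) := by
  have hdrift : Complex.I • H₀ = ((E₁ + E₂) / 2) • Complex.I • 1
      + ((E₁ - E₂) / 2) • Complex.I • pauliZ := by
    subst hH₀
    ext i j; fin_cases i <;> fin_cases j <;> simp [pauliZ, Complex.real_smul] <;> ring
  have hcontrol : Complex.I • H₁ = d • Complex.I • pauliX := by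
    subst hH₁
    ext i j; fin_cases i <;> fin_cases j <;> simp [pauliX, Complex.real_smul] <;> ring
  rw [hdrift, hcontrol] at hL
  change L = LieSubalgebra.lieSpan ℝ _ (twoLevelGenerators _ _ d) at hL
  subst hL
  have hβ : (E₁ - E₂) / 2 ≠ 0 := div_ne_zero (sub_ne_zero.mpr hE) two_ne_zero
  have hsu := specialUnitaryLieAlgebra_le_lieSpan (α := (E₁ + E₂) / 2) hβ hd
  refine ⟨fun hsum X => ⟨fun hX => lieSpan_le_unitaryLieAlgebra hX,
    fun hX => unitaryLieAlgebra_le_lieSpan (div_ne_zero hsum two_ne_zero) hβ hd hX⟩,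
    fun hsum X => ⟨fun hX => ?_, fun hX => hsu hX⟩, fun X hskew htr => hsu ⟨hskew, htr⟩⟩
  rw [hsum, zero_div] at hX
  exact lieSpan_le_specialUnitaryLieAlgebra hX
end

section
/- In the three-level λ-system, the one-dimensional subspace spanned by ψ₋ = (e₁-e₃)/√2 is invariant under every evolution operator in the group generated by exponentials of real linear combinations of iH₀ and iH₁; hence the system is not pure-state controllable. -/
/-!
ψ₋ is a common eigenvector of H₀ (eigenvalue E₁) and H₁ (eigenvalue 0), hence of every
i(aH₀ + bH₁) and of its exponential, so the line ℂψ₋ is invariant under the monoid these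
exponentials generate. A unit vector on a proper invariant line can never be carried to a unit
vector off it.
-/

open Matrix NormedSpace

variable {n 𝕂 : Type*} [Fintype n] [DecidableEq n] [RCLike 𝕂]

theorem Matrix.pow_mulVec_of_mulVec_eq_smul {A : Matrix n n 𝕂} {v : n → 𝕂} {μ : 𝕂}
    (h : A *ᵥ v = μ • v) (k : ℕ) : (A ^ k) *ᵥ v = μ ^ k • v := by
  induction k with
  | zero => simp
  | succ k ih => rw [pow_succ, ← mulVec_mulVec, h, mulVec_smul, ih, smul_smul, pow_succ']

-- `exp` depends only on the topology; a compatible norm is needed just for the series to converge.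
attribute [local instance] Matrix.linftyOpNormedRing Matrix.linftyOpNormedAlgebra in
theorem Matrix.exp_mulVec_of_mulVec_eq_smul {A : Matrix n n 𝕂} {v : n → 𝕂} {μ : 𝕂}
    (h : A *ᵥ v = μ • v) : exp A *ᵥ v = exp μ • v := by
  let evalAt : Matrix n n 𝕂 →ₗ[𝕂] n → 𝕂 := (mulVecBilin 𝕂 𝕂).flip v
  have hA := (exp_series_hasSum_exp' (𝕂 := 𝕂) A).map evalAt
    (LinearMap.continuous_of_finiteDimensional evalAt)
  refine hA.unique ?_
  convert (exp_series_hasSum_exp' (𝕂 := 𝕂) μ).smul_const v using 2 with k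
  simp [evalAt, pow_mulVec_of_mulVec_eq_smul h, smul_smul]

def Submodule.matrixStabilizer (p : Submodule 𝕂 (n → 𝕂)) : Submonoid (Matrix n n 𝕂) where
  carrier := {U | ∀ v ∈ p, U *ᵥ v ∈ p}
  one_mem' v hv := by rwa [one_mulVec]
  mul_mem' hU hV v hv := by rw [← mulVec_mulVec]; exact hU _ (hV v hv)

theorem Submodule.mem_matrixStabilizer_span_singleton {U : Matrix n n 𝕂} {ψ : n → 𝕂} {μ : 𝕂}
    (h : U *ᵥ ψ = μ • ψ) : U ∈ (𝕂 ∙ ψ).matrixStabilizer := by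
  intro v hv
  obtain ⟨c, rfl⟩ := Submodule.mem_span_singleton.mp hv
  rw [mulVec_smul, h, smul_comm]
  exact Submodule.smul_mem _ _ (Submodule.smul_mem _ _ (Submodule.mem_span_singleton_self ψ))

theorem Submodule.not_forall_exists_mulVec_eq_of_le_matrixStabilizer
    {G : Submonoid (Matrix n n 𝕂)} {p : Submodule 𝕂 (n → 𝕂)}
    (hG : G ≤ p.matrixStabilizer) (hbot : p ≠ ⊥) (htop : p ≠ ⊤) :
    ¬ ∀ φ₀ φ₁ : EuclideanSpace 𝕂 n, ‖φ₀‖ = 1 → ‖φ₁‖ = 1 → ∃ U ∈ G, U *ᵥ φ₀ = φ₁ := by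
  obtain ⟨x, hxp, hx0⟩ := p.exists_mem_ne_zero_of_ne_bot hbot
  obtain ⟨y, -, hyp⟩ := SetLike.exists_of_lt (lt_top_iff_ne_top.mpr htop)
  have hy0 : y ≠ 0 := by rintro rfl; exact hyp p.zero_mem
  let x' := WithLp.toLp 2 x
  let y' := WithLp.toLp 2 y
  have hx'0 : x' ≠ 0 := by simpa [x'] using hx0
  have hy'0 : y' ≠ 0 := by simpa [y'] using hy0
  intro htrans
  obtain ⟨U, hU, hUy⟩ :=
    htrans _ _ (norm_smul_inv_norm (𝕜 := 𝕂) hx'0) (norm_smul_inv_norm (𝕜 := 𝕂) hy'0)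
  have hUy' : U *ᵥ ((‖x'‖⁻¹ : 𝕂) • x) = (‖y'‖⁻¹ : 𝕂) • y := hUy
  have hmem := hG hU _ (p.smul_mem (‖x'‖⁻¹ : 𝕂) hxp)
  rw [hUy'] at hmem
  have hc : (‖y'‖⁻¹ : 𝕂) ≠ 0 := inv_ne_zero (RCLike.ofReal_ne_zero.mpr (norm_ne_zero_iff.mpr hy'0))
  exact hyp ((p.smul_mem_iff hc).mp hmem)

theorem lambda_system_not_pure_state_controllable_general (E₁ E₂ d : ℝ)
    (H₀ H₁ : Matrix (Fin 3) (Fin 3) ℂ)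
    (hH₀ : H₀ = Matrix.of ![![(E₁ : ℂ), 0, 0], ![0, (E₂ : ℂ), 0], ![0, 0, (E₁ : ℂ)]])
    (hH₁ : H₁ = Matrix.of ![![0, (d : ℂ), 0], ![(d : ℂ), 0, (d : ℂ)], ![0, (d : ℂ), 0]])
    (ψ : Fin 3 → ℂ)
    (hψ : ψ = (Real.sqrt 2 : ℂ)⁻¹ • ![1, 0, -1])
    (G : Submonoid (Matrix (Fin 3) (Fin 3) ℂ))
    (hG : G = Submonoid.closure
      {X | ∃ a b : ℝ, X = NormedSpace.exp (a • (Complex.I • H₀) + b • (Complex.I • H₁))}) :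
    (∀ U ∈ G, ∀ v ∈ Submodule.span ℂ ({ψ} : Set (Fin 3 → ℂ)),
      U.mulVec v ∈ Submodule.span ℂ ({ψ} : Set (Fin 3 → ℂ))) ∧
    ¬ (∀ φ₀ φ₁ : EuclideanSpace ℂ (Fin 3), ‖φ₀‖ = 1 → ‖φ₁‖ = 1 →
        ∃ U ∈ G, U.mulVec φ₀ = φ₁) := by
  have hψ₀ : ψ ≠ 0 := by
    rw [hψ]; intro h; simpa using congrFun h 0
  have hH₀ψ : H₀ *ᵥ ψ = (E₁ : ℂ) • ψ := by
    subst hH₀ hψ; ext i; fin_cases i <;> simp [mulVec, dotProduct, Fin.sum_univ_three]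
  have hH₁ψ : H₁ *ᵥ ψ = 0 := by
    subst hH₁ hψ; ext i; fin_cases i <;> simp [mulVec, dotProduct, Fin.sum_univ_three]
  have hstab : G ≤ (ℂ ∙ ψ).matrixStabilizer := by
    rw [hG, Submonoid.closure_le]
    rintro _ ⟨a, b, rfl⟩
    refine Submodule.mem_matrixStabilizer_span_singleton
      (Matrix.exp_mulVec_of_mulVec_eq_smul (μ := a * Complex.I * E₁) ?_)
    simp [add_mulVec, smul_mulVec, hH₀ψ, hH₁ψ, ← Complex.coe_smul, smul_smul, mul_assoc]
  refine ⟨fun U hU => hstab hU,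
    Submodule.not_forall_exists_mulVec_eq_of_le_matrixStabilizer hstab ?_ ?_⟩
  · simpa using hψ₀
  · intro htop
    have hline := finrank_span_singleton (K := ℂ) hψ₀
    rw [htop, finrank_top] at hline
    simp at hline

/-- In the three-level λ-system the line spanned by ψ₋ = (e₁-e₃)/√2 is invariant
under every element of the group generated by exponentials of real linear
combinations of iH₀ and iH₁; hence the system is not pure-state controllable. -/
theorem lambda_system_not_pure_state_controllable (E₁ E₂ d : ℝ) (hE : E₁ ≠ E₂)
    (H₀ H₁ : Matrix (Fin 3) (Fin 3) ℂ)
    (hH₀ : H₀ = Matrix.of ![![(E₁ : ℂ), 0, 0], ![0, (E₂ : ℂ), 0], ![0, 0, (E₁ : ℂ)]])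
    (hH₁ : H₁ = Matrix.of ![![0, (d : ℂ), 0], ![(d : ℂ), 0, (d : ℂ)], ![0, (d : ℂ), 0]])
    (ψ : Fin 3 → ℂ)
    (hψ : ψ = (Real.sqrt 2 : ℂ)⁻¹ • ![1, 0, -1])
    (G : Submonoid (Matrix (Fin 3) (Fin 3) ℂ))
    (hG : G = Submonoid.closure
      {X | ∃ a b : ℝ, X = NormedSpace.exp (a • (Complex.I • H₀) + b • (Complex.I • H₁))}) :
    (∀ U ∈ G, ∀ v ∈ Submodule.span ℂ ({ψ} : Set (Fin 3 → ℂ)),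
      U.mulVec v ∈ Submodule.span ℂ ({ψ} : Set (Fin 3 → ℂ))) ∧
    ¬ (∀ φ₀ φ₁ : EuclideanSpace ℂ (Fin 3), ‖φ₀‖ = 1 → ‖φ₁‖ = 1 →
        ∃ U ∈ G, U.mulVec φ₀ = φ₁) :=
  lambda_system_not_pure_state_controllable_general E₁ E₂ d H₀ H₁ hH₀ hH₁ ψ hψ G hG
end

section
/- If H₀ is strongly regular (distinct eigenvalues with pairwise distinct differences) and diagonal, then the iterated commutators of iH₀ with a matrix X can isolate individual off-diagonal matrix elements: the span of {ad_{iH₀}^k (iH₁) : k ≥ 0} together with iH₁ contains, for each pair (m,n) with (H₁)_{mn} ≠ 0, the skew-Hermitian matrices i(E_{mn} + E_{nm}) and (E_{mn} - E_{nm}). -/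
/-!
Commutation with `i H₀ = diagonal (i E)` multiplies the `(i, j)` entry by `i (E i - E j)`, so the
real span of the iterates `ad^k (i H₁)` contains every matrix with entries
`p (i (E i - E j)) * (i H₁) i j`, `p` a real polynomial. Strong regularity makes the non-real node
`i (E m - E n)` differ from every other node except its conjugate `i (E n - E m)`, so `p` can take
any prescribed value there and vanish at all other nodes. Since `p` is real, its value at the
conjugate node is forced to be the conjugate, which is exactly the symmetry of the Hermitian `H₁`.
-/

open Matrix Polynomial ComplexConjugate Complex

def StronglyRegular {ι : Type*} (E : ι → ℝ) : Prop :=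
  ∀ i j m n, i ≠ j → m ≠ n → E i - E j = E m - E n → i = m ∧ j = n

namespace StronglyRegular

variable {ι : Type*} {E : ι → ℝ}

theorem injective (hE : StronglyRegular E) : Function.Injective E := by
  intro i j h
  by_contra hij
  exact hij (hE i j j i hij (Ne.symm hij) (by rw [h])).1

theorem eq_of_sub_eq_sub (hE : StronglyRegular E) {i j m n : ι} (hmn : m ≠ n)
    (h : E i - E j = E m - E n) : i = m ∧ j = n := by
  rcases eq_or_ne i j with rfl | hij
  · exact absurd (hE.injective (sub_eq_zero.mp (by linarith))) hmn
  · exact hE i j m n hij hmn h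

end StronglyRegular

section Hadamard

variable {n R A : Type*}

theorem diagonal_mul_sub_mul_diagonal [Fintype n] [DecidableEq n] [CommRing A] (d : n → A)
    (X : Matrix n n A) : diagonal d * X - X * diagonal d = of (fun i j => d i - d j) ⊙ X := by
  ext i j
  simp only [Matrix.sub_apply, diagonal_mul, mul_diagonal, hadamard_apply, of_apply]
  ring

theorem iterate_hadamard_apply [Monoid A] (W X : Matrix n n A) (k : ℕ) (i j : n) :
    (W ⊙ ·)^[k] X i j = W i j ^ k * X i j := by
  induction k with
  | zero => simp
  | succ k ih => rw [Function.iterate_succ_apply', hadamard_apply, ih, pow_succ', mul_assoc]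

theorem map_aeval_hadamard_mem_span_iterate [CommSemiring R] [Semiring A] [Algebra R A]
    (p : R[X]) (W X : Matrix n n A) :
    W.map (aeval · p) ⊙ X ∈ Submodule.span R (Set.range fun k => (W ⊙ ·)^[k] X) := by
  have hsum : W.map (aeval · p) ⊙ X = ∑ k ∈ Finset.range (p.natDegree + 1),
      p.coeff k • (W ⊙ ·)^[k] X := by
    ext i j
    simp [aeval_eq_sum_range, Matrix.sum_apply, Finset.sum_mul, iterate_hadamard_apply]
  rw [hsum]
  exact Submodule.sum_mem _ fun k _ =>
    Submodule.smul_mem _ _ (Submodule.subset_span ⟨k, rfl⟩)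

end Hadamard

theorem aeval_quadratic_eq_mul_conj (s z : ℂ) :
    aeval z (X ^ 2 - C (2 * s.re) * X + C (‖s‖ ^ 2) : ℝ[X]) = (z - s) * (z - conj s) := by
  simp only [map_add, map_sub, map_mul, map_pow, aeval_X, aeval_C, coe_algebraMap]
  rw [← ofReal_mul, ← add_conj, ← mul_conj']
  ring

theorem exists_aeval_eq_of_im_ne_zero {z : ℂ} (hz : z.im ≠ 0) (c : ℂ) :
    ∃ p : ℝ[X], aeval z p = c := by
  refine ⟨C (c.re - c.im / z.im * z.re) + C (c.im / z.im) * X, ?_⟩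
  apply Complex.ext <;> simp [field]

theorem exists_aeval_eq_and_forall_aeval_eq_zero {z : ℂ} (hz : z.im ≠ 0) {S : Finset ℂ}
    (hzS : z ∉ S) (hzS' : conj z ∉ S) (c : ℂ) :
    ∃ p : ℝ[X], aeval z p = c ∧ ∀ s ∈ S, aeval s p = 0 := by
  set r : ℝ[X] := ∏ s ∈ S, (X ^ 2 - C (2 * s.re) * X + C (‖s‖ ^ 2))
  have hr : ∀ w, aeval w r = ∏ s ∈ S, (w - s) * (w - conj s) := by
    simp only [r, map_prod, aeval_quadratic_eq_mul_conj, implies_true]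
  have hrz : aeval z r ≠ 0 := by
    rw [hr, Finset.prod_ne_zero_iff]
    intro s hs
    refine mul_ne_zero (sub_ne_zero.mpr fun h => hzS (h ▸ hs)) (sub_ne_zero.mpr fun h => ?_)
    exact hzS' (by rwa [h, conj_conj])
  obtain ⟨q, hq⟩ := exists_aeval_eq_of_im_ne_zero hz (c / aeval z r)
  refine ⟨q * r, by rw [map_mul, hq, div_mul_cancel₀ _ hrz], fun s hs => ?_⟩
  rw [map_mul, hr, Finset.prod_eq_zero hs (by simp), mul_zero]

theorem StronglyRegular.exists_aeval_eq_and_aeval_eq_zero {ι : Type*} [Fintype ι]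
    [DecidableEq ι] {E : ι → ℝ} (hE : StronglyRegular E) {m n : ι} (hmn : m ≠ n) (c : ℂ) :
    ∃ p : ℝ[X], aeval (I * (E m - E n)) p = c ∧ ∀ i j, ¬(i = m ∧ j = n) → ¬(i = n ∧ j = m) →
      aeval (I * (E i - E j)) p = 0 := by
  set w : ι → ι → ℂ := fun i j => I * (E i - E j)
  have hw_im (i j : ι) : (w i j).im = E i - E j := by simp [w]
  have hw_eq {i j a b : ι} (hab : a ≠ b) (h : w i j = w a b) : i = a ∧ j = b :=
    hE.eq_of_sub_eq_sub hab (by rw [← hw_im, h, hw_im])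
  set S := ((Finset.univ : Finset (ι × ι)).filter fun p => p ≠ (m, n) ∧ p ≠ (n, m)).image
    fun p => w p.1 p.2
  have hwS : w m n ∉ S := by
    simp only [S, Finset.mem_image, Finset.mem_filter]
    rintro ⟨⟨i, j⟩, ⟨-, hne, -⟩, h⟩
    exact hne (Prod.ext_iff.mpr (hw_eq hmn h))
  have hw_conj : conj (w m n) = w n m := by
    apply Complex.ext <;> simp [w]
  have hwS' : conj (w m n) ∉ S := by
    simp only [S, Finset.mem_image, Finset.mem_filter, hw_conj]
    rintro ⟨⟨i, j⟩, ⟨-, -, hne⟩, h⟩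
    exact hne (Prod.ext_iff.mpr (hw_eq hmn.symm h))
  have hw_im_ne : (w m n).im ≠ 0 := by
    rw [hw_im]
    exact sub_ne_zero.mpr (hE.injective.ne hmn)
  obtain ⟨p, hpc, hpS⟩ := exists_aeval_eq_and_forall_aeval_eq_zero hw_im_ne hwS hwS' c
  refine ⟨p, hpc, fun i j hmn_ij hnm_ij => hpS _ ?_⟩
  simp only [S, Finset.mem_image, Finset.mem_filter, Finset.mem_univ, true_and]
  exact ⟨(i, j), ⟨fun h => hmn_ij (Prod.ext_iff.mp h), fun h => hnm_ij (Prod.ext_iff.mp h)⟩, rfl⟩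

theorem single_sub_single_conj_mem_span_iterate {ι : Type*} [Fintype ι] [DecidableEq ι]
    {E : ι → ℝ} (hE : StronglyRegular E) {H : Matrix ι ι ℂ} (hH : H.IsHermitian) {m n : ι}
    (hmn : m ≠ n) (hHmn : H m n ≠ 0) (z : ℂ) :
    single m n z - single n m (conj z) ∈ Submodule.span ℝ
      (Set.range fun k => (of (fun i j => I * (E i - E j)) ⊙ ·)^[k] (I • H)) := by
  obtain ⟨p, hpz, hp0⟩ := hE.exists_aeval_eq_and_aeval_eq_zero hmn (z / (I * H m n))
  convert map_aeval_hadamard_mem_span_iterate p _ (I • H) using 1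
  ext i j
  simp only [Matrix.sub_apply, single_apply, hadamard_apply, map_apply, of_apply,
    Matrix.smul_apply]
  by_cases hmn_ij : m = i ∧ n = j
  · obtain ⟨rfl, rfl⟩ := hmn_ij
    simp only [and_self, ↓reduceIte, hmn, and_false, sub_zero, hpz, smul_eq_mul]
    field_simp
  by_cases hnm_ij : n = i ∧ m = j
  · obtain ⟨rfl, rfl⟩ := hnm_ij
    have hconj : I * (E n - E m) = conj (I * (E m - E n)) := by
      apply Complex.ext <;> simp
    have hHnm : conj (H m n) ≠ 0 := (_root_.map_ne_zero _).mpr hHmn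
    rw [hconj, aeval_conj, hpz, ← hH.apply n m]
    simp only [hmn, false_and, ↓reduceIte, and_self, zero_sub, map_div₀, map_mul, conj_I, neg_mul,
      RCLike.star_def, smul_eq_mul]
    field_simp
  rw [hp0 i j (fun h => hmn_ij ⟨h.1.symm, h.2.symm⟩) (fun h => hnm_ij ⟨h.1.symm, h.2.symm⟩)]
  simp [hmn_ij, hnm_ij]

theorem strongly_regular_isolates_matrix_elements_general {N : ℕ}
    (E : Fin N → ℝ)
    (hsreg : ∀ i j m n, i ≠ j → m ≠ n → E i - E j = E m - E n → i = m ∧ j = n)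
    (H₀ H₁ : Matrix (Fin N) (Fin N) ℂ)
    (hH₀ : H₀ = Matrix.diagonal (fun i => (E i : ℂ)))
    (hH₁ : H₁.IsHermitian)
    (adH : Matrix (Fin N) (Fin N) ℂ → Matrix (Fin N) (Fin N) ℂ)
    (hadH : adH = fun X => (Complex.I • H₀) * X - X * (Complex.I • H₀)) :
    ∀ m n : Fin N, m ≠ n → H₁ m n ≠ 0 →
      Complex.I • (Matrix.single m n (1 : ℂ) + Matrix.single n m (1 : ℂ))
        ∈ Submodule.span ℝ ({Complex.I • H₁} ∪
            {X | ∃ k : ℕ, X = adH^[k] (Complex.I • H₁)}) ∧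
      (Matrix.single m n (1 : ℂ) - Matrix.single n m (1 : ℂ))
        ∈ Submodule.span ℝ ({Complex.I • H₁} ∪
            {X | ∃ k : ℕ, X = adH^[k] (Complex.I • H₁)}) := by
  intro m n hmn hH₁mn
  obtain rfl : adH = (of (fun i j => I * (E i - E j)) ⊙ ·) := by
    funext X
    simp only [hadH, hH₀, ← diagonal_smul]
    rw [diagonal_mul_sub_mul_diagonal]
    congr 1
    ext i j
    simp [mul_sub]
  have hmem (z : ℂ) : single m n z - single n m (conj z) ∈ Submodule.span ℝ
      ({I • H₁} ∪ {X | ∃ k : ℕ, X = (of (fun i j => I * (E i - E j)) ⊙ ·)^[k] (I • H₁)}) := by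
    refine Submodule.span_mono ?_ (single_sub_single_conj_mem_span_iterate hsreg hH₁ hmn hH₁mn z)
    rintro _ ⟨k, rfl⟩
    exact Or.inr ⟨k, rfl⟩
  constructor
  · convert hmem I using 1
    simp [smul_single, sub_eq_add_neg, ← single_neg]
  · simpa using hmem 1

/-- For a strongly regular diagonal H₀, iterated commutators with iH₀ isolate
individual off-diagonal elements: for each pair (m,n) with (H₁)ₘₙ ≠ 0, the real
span of the iterated commutators ad_{iH₀}^k(iH₁) (together with iH₁) contains
the skew-Hermitian matrices i(Eₘₙ + Eₙₘ) and (Eₘₙ - Eₙₘ). -/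
theorem strongly_regular_isolates_matrix_elements {N : ℕ}
    (E : Fin N → ℝ)
    (hreg : ∀ i j, i ≠ j → E i ≠ E j)
    (hsreg : ∀ i j m n, i ≠ j → m ≠ n → E i - E j = E m - E n → i = m ∧ j = n)
    (H₀ H₁ : Matrix (Fin N) (Fin N) ℂ)
    (hH₀ : H₀ = Matrix.diagonal (fun i => (E i : ℂ)))
    (hH₁ : H₁.IsHermitian)
    (adH : Matrix (Fin N) (Fin N) ℂ → Matrix (Fin N) (Fin N) ℂ)
    (hadH : adH = fun X => (Complex.I • H₀) * X - X * (Complex.I • H₀)) :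
    ∀ m n : Fin N, m ≠ n → H₁ m n ≠ 0 →
      Complex.I • (Matrix.single m n (1 : ℂ) + Matrix.single n m (1 : ℂ))
        ∈ Submodule.span ℝ ({Complex.I • H₁} ∪
            {X | ∃ k : ℕ, X = adH^[k] (Complex.I • H₁)}) ∧
      (Matrix.single m n (1 : ℂ) - Matrix.single n m (1 : ℂ))
        ∈ Submodule.span ℝ ({Complex.I • H₁} ∪
            {X | ∃ k : ℕ, X = adH^[k] (Complex.I • H₁)}) :=
  strongly_regular_isolates_matrix_elements_general E hsreg H₀ H₁ hH₀ hH₁ adH hadH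
end
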